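/- arXiv:2603.13936 — 2 statements merged into one kernel-verified Lean document; each statement's English description precedes it below -/
import Mathlib

section
/- Let ψ ∈ GL_d(ℤ) have an eigenvalue λ (over ℂ) with |λ| ≥ 2. Then there exists v ∈ ℤ^d such that for all n ≥ 0, the 2^{n+1} elements ∑_{k=0}^{n} ε_k ψ^k(v) with ε_k ∈ {0,1} are pairwise distinct; consequently the set T^{(n)} = {∑_{k=0}^n ε_k ψ^k(v) : ε_k ∈ {0,1}} has cardinality 2^{n+1}. -/
/-!
A left eigenvector `w` of `ψ` for `λ` gives an additive functional `x ↦ w ⬝ᵥ x` on `ℤ^d` that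
sends `ψ^k v` to `λ^k (w ⬝ᵥ v)`. Taking `v` with `w ⬝ᵥ v ≠ 0`, it maps the `{0,1}`-combinations
of the orbit of `v` to `(w ⬝ᵥ v) ∑ ε_k λ^k`, and these are pairwise distinct because for `|λ| ≥ 2`
the top power `λ^n` outweighs any `{-1,0,1}`-combination of lower powers:
`∑_{k<n} |λ|^k ≤ |λ|^n - 1`.
-/

open Matrix

section BitSum

variable {A : Type*} [AddCommMonoid A]

def bitSum (f : ℕ → A) {n : ℕ} (ε : Fin n → Bool) : A :=
  ∑ j : Fin n, if ε j then f j else 0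

lemma bitSum_succ (f : ℕ → A) {n : ℕ} (ε : Fin (n + 1) → Bool) :
    bitSum f ε = bitSum f (Fin.init ε) + if ε (Fin.last n) then f n else 0 := by
  simp only [bitSum, Fin.sum_univ_castSucc, Fin.init, Fin.val_castSucc, Fin.val_last]
  rfl

lemma map_bitSum {B F : Type*} [AddCommMonoid B] [FunLike F A B] [AddMonoidHomClass F A B]
    (g : F) (f : ℕ → A) {n : ℕ} (ε : Fin n → Bool) :
    g (bitSum f ε) = bitSum (g ∘ f) ε := by
  simp [bitSum, map_sum, apply_ite g]

end BitSum

lemma sum_range_pow_le_pow_sub_one {r : ℝ} (hr : 2 ≤ r) (n : ℕ) :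
    ∑ j ∈ Finset.range n, r ^ j ≤ r ^ n - 1 := by
  induction n with
  | zero => simp
  | succ n ih =>
    rw [Finset.sum_range_succ, pow_succ]
    nlinarith [pow_nonneg (by linarith : (0 : ℝ) ≤ r) n]

section NormedDivisionRing

variable {R : Type*} [NormedDivisionRing R] {μ : R}

lemma norm_bitSum_pow_sub_le (hμ : 2 ≤ ‖μ‖) {n : ℕ} (ε ε' : Fin n → Bool) :
    ‖bitSum (μ ^ ·) ε - bitSum (μ ^ ·) ε'‖ ≤ ‖μ‖ ^ n - 1 := by
  have hterm : ∀ j : Fin n,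
      ‖(if ε j then μ ^ (j : ℕ) else 0) - if ε' j then μ ^ (j : ℕ) else 0‖ ≤ ‖μ‖ ^ (j : ℕ) := by
    intro j
    cases ε j <;> cases ε' j <;> simp
  calc ‖bitSum (μ ^ ·) ε - bitSum (μ ^ ·) ε'‖
      ≤ ∑ j : Fin n, ‖μ‖ ^ (j : ℕ) := by
        rw [bitSum, bitSum, ← Finset.sum_sub_distrib]
        exact norm_sum_le_of_le _ fun j _ => hterm j
    _ = ∑ j ∈ Finset.range n, ‖μ‖ ^ j := Fin.sum_univ_eq_sum_range (‖μ‖ ^ ·) n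
    _ ≤ ‖μ‖ ^ n - 1 := sum_range_pow_le_pow_sub_one hμ n

lemma bitSum_pow_injective (hμ : 2 ≤ ‖μ‖) (n : ℕ) :
    Function.Injective (bitSum (μ ^ ·) : (Fin n → Bool) → R) := by
  induction n with
  | zero => intro ε ε' _; exact Subsingleton.elim ε ε'
  | succ n ih =>
    intro ε ε' h
    rw [bitSum_succ, bitSum_succ] at h
    have hlast : ε (Fin.last n) = ε' (Fin.last n) := by
      by_contra hne
      wlog hε : ε (Fin.last n) = true generalizing ε ε'
      · exact this h.symm (Ne.symm hne) (by simpa [hε] using hne)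
      have hε' : ε' (Fin.last n) = false := by simpa [hε] using Ne.symm hne
      rw [hε, hε'] at h
      simp only [if_true, Bool.false_eq_true, if_false, add_zero] at h
      have hbound := norm_bitSum_pow_sub_le hμ (Fin.init ε') (Fin.init ε)
      rw [← h, add_sub_cancel_left, norm_pow] at hbound
      linarith
    have hinit : Fin.init ε = Fin.init ε' := by
      rw [hlast] at h
      exact ih (add_right_cancel h)
    rw [← Fin.snoc_init_self ε, ← Fin.snoc_init_self ε', hinit, hlast]

end NormedDivisionRing

lemma bitSum_injective_of_map_eq_mul_pow {A K F : Type*} [AddCommMonoid A] [NormedDivisionRing K]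
    [FunLike F A K] [AddMonoidHomClass F A K] (g : F) {f : ℕ → A} {c μ : K} (hc : c ≠ 0)
    (hμ : 2 ≤ ‖μ‖) (hf : ∀ k, g (f k) = μ ^ k * c) (n : ℕ) :
    Function.Injective (bitSum f : (Fin n → Bool) → A) := by
  have hgf : (g ∘ bitSum f : (Fin n → Bool) → K) = AddMonoidHom.mulRight c ∘ bitSum (μ ^ ·) := by
    ext ε
    simp only [Function.comp_apply, map_bitSum]
    congr 1
    ext k
    exact hf k
  refine Function.Injective.of_comp (f := g) ?_
  rw [hgf]
  exact (mul_left_injective₀ hc).comp (bitSum_pow_injective hμ n)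

namespace Matrix

variable {n R : Type*} [Fintype n] [DecidableEq n]

lemma exists_vecMul_eq_smul_of_isRoot_charpoly [CommRing R] [IsDomain R]
    {M : Matrix n n R} {μ : R} (h : M.charpoly.IsRoot μ) : ∃ w ≠ 0, w ᵥ* M = μ • w := by
  rw [← charpoly_transpose, ← charpoly_toLin', ← Module.End.hasEigenvalue_iff_isRoot_charpoly] at h
  obtain ⟨w, hw⟩ := h.exists_hasEigenvector
  exact ⟨w, hw.2, by simpa [mulVec_transpose] using hw.apply_eq_smul⟩

lemma dotProduct_pow_mulVec_of_vecMul_eq_smul [CommSemiring R] {M : Matrix n n R} {w : n → R}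
    {μ : R} (hw : w ᵥ* M = μ • w) (k : ℕ) (y : n → R) :
    w ⬝ᵥ (M ^ k *ᵥ y) = μ ^ k * (w ⬝ᵥ y) := by
  induction k with
  | zero => simp
  | succ k ih => rw [pow_succ', ← mulVec_mulVec, dotProduct_mulVec, hw, smul_dotProduct, ih,
      smul_eq_mul, pow_succ', mul_assoc]

lemma dotProduct_map_pow_mulVec {S : Type*} [CommSemiring R] [CommSemiring S] (f : R →+* S)
    {M : Matrix n n R} {w : n → S} {μ : S} (hw : w ᵥ* M.map f = μ • w) (k : ℕ) (x : n → R) :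
    w ⬝ᵥ (f ∘ (M ^ k *ᵥ x)) = μ ^ k * (w ⬝ᵥ (f ∘ x)) := by
  have hmap : f ∘ (M ^ k *ᵥ x) = M.map f ^ k *ᵥ (f ∘ x) := by
    ext i
    rw [Function.comp_apply, RingHom.map_mulVec, Matrix.map_pow]
  rw [hmap, dotProduct_pow_mulVec_of_vecMul_eq_smul hw]

end Matrix

theorem stmt8_general (d : ℕ) (ψ : Matrix (Fin d) (Fin d) ℤ)
    (lam : ℂ) (hev : ((ψ.map (Int.cast : ℤ → ℂ)).charpoly).IsRoot lam)
    (hlam : 2 ≤ ‖lam‖) :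
    ∃ v : Fin d → ℤ, ∀ n : ℕ,
      Function.Injective (fun ε : Fin (n + 1) → Bool =>
        ∑ j : Fin (n + 1), (if ε j then (ψ ^ (j : ℕ)).mulVec v else 0)) ∧
      ((Finset.univ : Finset (Fin (n + 1) → Bool)).image (fun ε =>
        ∑ j : Fin (n + 1), (if ε j then (ψ ^ (j : ℕ)).mulVec v else 0))).card
        = 2 ^ (n + 1) := by
  obtain ⟨w, hw0, hw⟩ := exists_vecMul_eq_smul_of_isRoot_charpoly hev
  change w ᵥ* ψ.map (Int.castRingHom ℂ) = lam • w at hw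
  obtain ⟨i, hi⟩ : ∃ i, w i ≠ 0 := Function.ne_iff.mp hw0
  let g : (Fin d → ℤ) →+ ℂ := AddMonoidHom.mk' (fun x => w ⬝ᵥ (Int.castRingHom ℂ ∘ x))
    fun x y => by rw [← dotProduct_add]; congr 1; ext; simp
  have hg (k : ℕ) : g ((ψ ^ k) *ᵥ Pi.single i 1) = lam ^ k * w i := by
    rw [AddMonoidHom.mk'_apply, dotProduct_map_pow_mulVec _ hw]
    simp [Pi.single_apply, dotProduct]
  refine ⟨Pi.single i 1, fun n => ?_⟩
  have hinj := bitSum_injective_of_map_eq_mul_pow g hi hlam hg (n + 1)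
  exact ⟨hinj, (Finset.card_image_of_injective _ hinj).trans (by simp)⟩

/-- de la Harpe's lemma: a hyperbolic integer matrix admits a vector whose
`{0,1}`-combinations along the orbit are pairwise distinct. -/
theorem stmt8 (d : ℕ) (ψ : Matrix (Fin d) (Fin d) ℤ) (hψ : IsUnit ψ.det)
    (lam : ℂ) (hev : ((ψ.map (Int.cast : ℤ → ℂ)).charpoly).IsRoot lam)
    (hlam : 2 ≤ ‖lam‖) :
    ∃ v : Fin d → ℤ, ∀ n : ℕ,
      Function.Injective (fun ε : Fin (n + 1) → Bool =>
        ∑ j : Fin (n + 1), (if ε j then (ψ ^ (j : ℕ)).mulVec v else 0)) ∧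
      ((Finset.univ : Finset (Fin (n + 1) → Bool)).image (fun ε =>
        ∑ j : Fin (n + 1), (if ε j then (ψ ^ (j : ℕ)).mulVec v else 0))).card
        = 2 ^ (n + 1) :=
  stmt8_general d ψ lam hev hlam
end

section
/- Let H be a Hilbert space and X ⊆ H an orthonormal set. For δ > 0, if Z is a finite-dimensional subspace of H such that every x ∈ X is within distance δ of some z ∈ Z, then dim Z ≥ (1 - δ²)·|X| (Voiculescu's lemma on approximation of orthonormal sets by finite-dimensional subspaces). -/
/-! Let `P` be the orthogonal projection onto `Z`. Each `x ∈ X` is `δ`-close to `Z`, so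
`‖P x‖² ≥ 1 - δ²` by Pythagoras. On the other hand, writing `‖P x‖²` by Parseval in an
orthonormal basis `b` of `Z` and exchanging the sums, each `b j` contributes at most `1` by
Bessel's inequality for `X`, so `∑ x ∈ X, ‖P x‖² ≤ dim Z`. -/

open Finset

namespace Submodule

variable {𝕜 E : Type*} [RCLike 𝕜] [NormedAddCommGroup E] [InnerProductSpace 𝕜 E]

theorem norm_sq_sub_norm_sq_le_norm_sq_starProjection (K : Submodule 𝕜 E)
    [K.HasOrthogonalProjection] {x z : E} (hz : z ∈ K) :
    ‖x‖ ^ 2 - ‖x - z‖ ^ 2 ≤ ‖K.starProjection x‖ ^ 2 := by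
  have hmin : ‖x - K.starProjection x‖ ≤ ‖x - z‖ := by
    rw [starProjection_minimal]
    exact ciInf_le ⟨0, fun _ ⟨w, hw⟩ => hw ▸ norm_nonneg _⟩ (⟨z, hz⟩ : K)
  have hpyth := K.norm_sq_eq_add_norm_sq_starProjection x
  rw [starProjection_orthogonal_val] at hpyth
  nlinarith [norm_nonneg (x - K.starProjection x)]

theorem sum_norm_sq_starProjection_le_finrank (K : Submodule 𝕜 E) [FiniteDimensional 𝕜 K]
    {ι : Type*} {v : ι → E} (hv : Orthonormal 𝕜 v) (s : Finset ι) :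
    ∑ i ∈ s, ‖K.starProjection (v i)‖ ^ 2 ≤ Module.finrank 𝕜 K := by
  let b := stdOrthonormalBasis 𝕜 K
  have parseval (y : E) : ‖K.starProjection y‖ ^ 2 = ∑ j, ‖inner 𝕜 (b j : E) y‖ ^ 2 := by
    rw [starProjection_apply, norm_coe, ← b.sum_sq_norm_inner_right]
    simp only [inner_orthogonalProjectionOnto_eq_of_mem_left]
  have bessel (j) : ∑ i ∈ s, ‖inner 𝕜 (b j : E) (v i)‖ ^ 2 ≤ 1 := by
    simpa only [norm_inner_symm, norm_coe, b.orthonormal.1 j, one_pow]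
      using hv.sum_inner_products_le (s := s) (b j : E)
  calc ∑ i ∈ s, ‖K.starProjection (v i)‖ ^ 2
      = ∑ j, ∑ i ∈ s, ‖inner 𝕜 (b j : E) (v i)‖ ^ 2 := by
        simp only [parseval]
        exact sum_comm
    _ ≤ ∑ _j, (1 : ℝ) := sum_le_sum fun j _ => bessel j
    _ = Module.finrank 𝕜 K := by simp

end Submodule

theorem stmt15_general {H : Type*} [NormedAddCommGroup H] [InnerProductSpace ℂ H]
    (X : Finset H) (hX : Orthonormal ℂ (fun x : X => (x : H)))
    (δ : ℝ) (Z : Submodule ℂ H) [FiniteDimensional ℂ Z]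
    (happrox : ∀ x ∈ X, ∃ z ∈ Z, ‖x - z‖ < δ) :
    (1 - δ ^ 2) * X.card ≤ (Module.finrank ℂ Z : ℝ) := by
  have close (x : X) : 1 - δ ^ 2 ≤ ‖Z.starProjection x‖ ^ 2 := by
    obtain ⟨z, hz, hxz⟩ := happrox x x.2
    have hx : ‖(x : H)‖ = 1 := hX.1 x
    have := Z.norm_sq_sub_norm_sq_le_norm_sq_starProjection (x := x) hz
    nlinarith [norm_nonneg ((x : H) - z)]
  calc (1 - δ ^ 2) * X.card
      = ∑ _x : X, (1 - δ ^ 2) := by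
        rw [sum_const, card_univ, Fintype.card_coe, nsmul_eq_mul, mul_comm]
    _ ≤ ∑ x : X, ‖Z.starProjection x‖ ^ 2 := sum_le_sum fun x _ => close x
    _ ≤ Module.finrank ℂ Z := Z.sum_norm_sq_starProjection_le_finrank hX univ

/-- Voiculescu's lemma: an orthonormal set δ-approximated by a finite-dimensional
subspace forces a lower bound on the dimension. -/
theorem stmt15 {H : Type*} [NormedAddCommGroup H] [InnerProductSpace ℂ H]
    (X : Finset H) (hX : Orthonormal ℂ (fun x : X => (x : H)))
    (δ : ℝ) (hδ : 0 < δ) (Z : Submodule ℂ H) [FiniteDimensional ℂ Z]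
    (happrox : ∀ x ∈ X, ∃ z ∈ Z, ‖x - z‖ < δ) :
    (1 - δ ^ 2) * X.card ≤ (Module.finrank ℂ Z : ℝ) :=
  stmt15_general X hX δ Z happrox
end
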